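/- arXiv:1906.09331 — 2 statements merged into one kernel-verified Lean document; each statement's English description precedes it below -/
import Mathlib

section
/- Let l be a natural number and set ε_l := 2^{−2^l}. Let q, v ∈ ℝ with v < q + 2·ε_l, and let K be a natural number such that q + k·ε_{l+1} ≤ v for every integer 1 ≤ k ≤ K. Then ∑_{k=1}^{K} (v − q − k·ε_{l+1}) < 2. -/
/-!
Write `a = ε_l`, so that `ε_{l+1} = a²`. Since `v - q < 2a`, the `k`-th regret is below
`2a - k a²`, and `∑_{k=1}^K (2a - k a²) = 2 - (aK - 2)² / 2 - a² K / 2 < 2` for every real `a`.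
-/

open Finset

theorem sum_Icc_natCast_mul_two (n : ℕ) : (∑ k ∈ Icc 1 n, (k : ℝ)) * 2 = n * (n + 1) := by
  induction n with
  | zero => simp
  | succ n ih =>
    rw [sum_Icc_succ_top (by omega), add_mul, ih]
    push_cast
    ring

theorem sum_Icc_two_mul_sub_natCast_mul_sq_lt_two (a : ℝ) (K : ℕ) :
    ∑ k ∈ Icc 1 K, (2 * a - k * a ^ 2) < 2 := by
  have hsum : (∑ k ∈ Icc 1 K, (2 * a - k * a ^ 2)) * 2 = 4 * a * K - a ^ 2 * (K * (K + 1)) := by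
    rw [sum_sub_distrib, sum_const, ← sum_mul, Nat.card_Icc, sub_mul, mul_right_comm,
      sum_Icc_natCast_mul_two, nsmul_eq_mul]
    push_cast
    ring
  have hpos : 0 < (a * K - 2) ^ 2 + a ^ 2 * K := by
    rcases eq_or_ne a 0 with rfl | ha
    · norm_num
    · rcases K.eq_zero_or_pos with rfl | hK
      · norm_num
      · have : (0 : ℝ) < K := by exact_mod_cast hK
        positivity
  nlinarith

theorem stmt_7_general (l K : ℕ) (q v : ℝ)
    (h1 : v < q + 2 * ((2 : ℝ) ^ (2 ^ l))⁻¹) :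
    ∑ k ∈ Finset.Icc 1 K, (v - q - (k : ℝ) * ((2 : ℝ) ^ (2 ^ (l + 1)))⁻¹) < 2 := by
  set a : ℝ := ((2 : ℝ) ^ (2 ^ l))⁻¹
  have hε : ((2 : ℝ) ^ (2 ^ (l + 1)))⁻¹ = a ^ 2 := by
    rw [pow_succ, pow_mul, inv_pow]
  calc ∑ k ∈ Icc 1 K, (v - q - (k : ℝ) * ((2 : ℝ) ^ (2 ^ (l + 1)))⁻¹)
      ≤ ∑ k ∈ Icc 1 K, (2 * a - k * a ^ 2) :=
        sum_le_sum fun k _ => by rw [hε]; linarith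
    _ < 2 := sum_Icc_two_mul_sub_natCast_mul_sq_lt_two a K

/-- Regret of the accepted exploration rounds of a phase is less than 2. -/
theorem stmt_7 (l K : ℕ) (q v : ℝ)
    (h1 : v < q + 2 * ((2 : ℝ) ^ (2 ^ l))⁻¹)
    (h2 : ∀ k : ℕ, 1 ≤ k → k ≤ K → q + (k : ℝ) * ((2 : ℝ) ^ (2 ^ (l + 1)))⁻¹ ≤ v) :
    ∑ k ∈ Finset.Icc 1 K, (v - q - (k : ℝ) * ((2 : ℝ) ^ (2 ^ (l + 1)))⁻¹) < 2 :=
  stmt_7_general l K q v h1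
end

section
/- Let l ≥ 1 and r be natural numbers, set ε_l := 2^{−2^l} and g(l) := 2^{2^l}, let v ∈ [0,1] and q ∈ ℝ, and let K be a natural number such that: v < q + 2·ε_{l−1}; q + k·ε_l ≤ v for every integer 1 ≤ k ≤ K; and v − (q + K·ε_l) < 2·ε_l. Then the phase regret satisfies ∑_{k=1}^{K} (v − q − k·ε_l) + r·v + g(l)·(v − q − K·ε_l) < r·v + 4. -/
/-!
Write `δ = ε_{l-1}` and `ε = ε_l`, so that `δ² ≤ ε` (with equality for `l ≥ 1`). Every exploration
term is below `2δ - kε`, and completing the square shows `∑_{k ≤ K} (a - kε) ≤ a² / (2ε)`, which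
for `a = 2δ` is at most `2`. The exploitation term is `g(l)` times a gap below
`2ε = 2 / g(l)`, hence below `2`.
-/

theorem sum_Icc_sub_mul_le_sq_div (a ε : ℝ) (hε : 0 < ε) (K : ℕ) :
    ∑ k ∈ Finset.Icc 1 K, (a - k * ε) ≤ a ^ 2 / (2 * ε) := by
  have hgauss : ∑ k ∈ Finset.Icc 1 K, (k : ℝ) = K * (K + 1) / 2 := by
    induction K with
    | zero => simp
    | succ n ih =>
      rw [Finset.sum_Icc_succ_top (by omega), ih]
      push_cast
      ring
  rw [Finset.sum_sub_distrib, Finset.sum_const, Nat.card_Icc, ← Finset.sum_mul, hgauss,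
    le_div_iff₀ (by positivity)]
  simp only [add_tsub_cancel_right, nsmul_eq_mul]
  nlinarith [sq_nonneg (a - K * ε), mul_nonneg hε.le (Nat.cast_nonneg (α := ℝ) K)]

theorem inv_two_pow_two_pow_pred_sq_le (l : ℕ) :
    ((2 : ℝ) ^ (2 ^ (l - 1)))⁻¹ ^ 2 ≤ ((2 : ℝ) ^ (2 ^ l))⁻¹ := by
  rw [inv_pow, ← pow_mul]
  refine inv_anti₀ (by positivity) (pow_le_pow_right₀ one_le_two ?_)
  calc 2 ^ l ≤ 2 ^ (l - 1 + 1) := Nat.pow_le_pow_right two_pos (by omega)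
    _ = 2 ^ (l - 1) * 2 := pow_succ 2 (l - 1)

theorem stmt_9_general (l r : ℕ) (v q : ℝ)
    (K : ℕ)
    (h1 : v < q + 2 * ((2 : ℝ) ^ (2 ^ (l - 1)))⁻¹)
    (h3 : v - (q + (K : ℝ) * ((2 : ℝ) ^ (2 ^ l))⁻¹) < 2 * ((2 : ℝ) ^ (2 ^ l))⁻¹) :
    (∑ k ∈ Finset.Icc 1 K, (v - q - (k : ℝ) * ((2 : ℝ) ^ (2 ^ l))⁻¹))
      + (r : ℝ) * v
      + (2 : ℝ) ^ (2 ^ l) * (v - q - (K : ℝ) * ((2 : ℝ) ^ (2 ^ l))⁻¹)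
      < (r : ℝ) * v + 4 := by
  set δ : ℝ := ((2 : ℝ) ^ (2 ^ (l - 1)))⁻¹
  set ε : ℝ := ((2 : ℝ) ^ (2 ^ l))⁻¹
  have hε : 0 < ε := by positivity
  have hexplore : ∑ k ∈ Finset.Icc 1 K, (v - q - k * ε) ≤ 2 :=
    calc ∑ k ∈ Finset.Icc 1 K, (v - q - k * ε)
        ≤ ∑ k ∈ Finset.Icc 1 K, (2 * δ - k * ε) :=
          Finset.sum_le_sum fun _ _ ↦ by linarith
      _ ≤ (2 * δ) ^ 2 / (2 * ε) := sum_Icc_sub_mul_le_sq_div _ _ hε K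
      _ ≤ 2 := by
          rw [div_le_iff₀ (by positivity)]
          nlinarith [inv_two_pow_two_pow_pred_sq_le l]
  have hexploit : (2 : ℝ) ^ (2 ^ l) * (v - q - K * ε) < 2 :=
    calc (2 : ℝ) ^ (2 ^ l) * (v - q - K * ε) < (2 : ℝ) ^ (2 ^ l) * (2 * ε) :=
          mul_lt_mul_of_pos_left (by linarith) (by positivity)
      _ = 2 := by rw [mul_left_comm, mul_inv_cancel₀ (by positivity), mul_one]
  linarith

/-- Per-phase regret bound R_l < r·v + 4 from the proof of Lemma 2. -/
theorem stmt_9 (l r : ℕ) (hl : 1 ≤ l) (v q : ℝ) (hv0 : 0 ≤ v) (hv1 : v ≤ 1)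
    (K : ℕ)
    (h1 : v < q + 2 * ((2 : ℝ) ^ (2 ^ (l - 1)))⁻¹)
    (h2 : ∀ k : ℕ, 1 ≤ k → k ≤ K → q + (k : ℝ) * ((2 : ℝ) ^ (2 ^ l))⁻¹ ≤ v)
    (h3 : v - (q + (K : ℝ) * ((2 : ℝ) ^ (2 ^ l))⁻¹) < 2 * ((2 : ℝ) ^ (2 ^ l))⁻¹) :
    (∑ k ∈ Finset.Icc 1 K, (v - q - (k : ℝ) * ((2 : ℝ) ^ (2 ^ l))⁻¹))
      + (r : ℝ) * v
      + (2 : ℝ) ^ (2 ^ l) * (v - q - (K : ℝ) * ((2 : ℝ) ^ (2 ^ l))⁻¹)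
      < (r : ℝ) * v + 4 :=
  stmt_9_general l r v q K h1 h3
end
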